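/- arXiv:2112.06069 — 5 statements merged into one kernel-verified Lean document; each statement's English description precedes it below -/
import Mathlib

section
/- Let M be a monoid (the index set), G a group, and c : M × M → G a function satisfying (Q1) c(u·v, w) = c(ᵘv, ᵘw)·c(u, w) and (Q2) c(u, v·w) = c(u, v)·c(ᵛu, ᵛw) for all u, v, w, where conjugation ᵘv in M makes sense (e.g. M is a group with ᵘv = u v u⁻¹). Then for all u, v, a, b in M one has c(u,v)·c(^{vu}a, ^{vu}b) = c(^{uv}a, ^{uv}b)·c(u,v). -/
theorem Q4_relation {M G : Type*} [Group M] [Group G] (c : M × M → G)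
    (hQ1 : ∀ u v w : M, c (u * v, w) = c (u * v * u⁻¹, u * w * u⁻¹) * c (u, w))
    (hQ2 : ∀ u v w : M, c (u, v * w) = c (u, v) * c (v * u * v⁻¹, v * w * v⁻¹)) :
    ∀ u v a b : M,
      c (u, v) * c ((v * u) * a * (v * u)⁻¹, (v * u) * b * (v * u)⁻¹) =
        c ((u * v) * a * (u * v)⁻¹, (u * v) * b * (u * v)⁻¹) * c (u, v) := by
  intro u v a b
  have e1 : c (u*a, v*b) =
      c (u*a*u⁻¹, u*v*u⁻¹) *
        (c ((u*v)*a*(u*v)⁻¹, (u*v)*b*(u*v)⁻¹) * (c (u, v) * c (v*u*v⁻¹, v*b*v⁻¹))) := by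
    rw [hQ1 u a (v*b), hQ2 u v b,
        show u*(v*b)*u⁻¹ = (u*v*u⁻¹)*(u*b*u⁻¹) by group,
        hQ2 (u*a*u⁻¹) (u*v*u⁻¹) (u*b*u⁻¹),
        show (u*v*u⁻¹)*(u*a*u⁻¹)*(u*v*u⁻¹)⁻¹ = (u*v)*a*(u*v)⁻¹ by group,
        show (u*v*u⁻¹)*(u*b*u⁻¹)*(u*v*u⁻¹)⁻¹ = (u*v)*b*(u*v)⁻¹ by group,
        mul_assoc]
  have e2 : c (u*a, v*b) =
      c (u*a*u⁻¹, u*v*u⁻¹) *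
        (c (u, v) * (c ((v*u)*a*(v*u)⁻¹, (v*u)*b*(v*u)⁻¹) * c (v*u*v⁻¹, v*b*v⁻¹))) := by
    rw [hQ2 (u*a) v b, hQ1 u a v,
        show v*(u*a)*v⁻¹ = (v*u*v⁻¹)*(v*a*v⁻¹) by group,
        hQ1 (v*u*v⁻¹) (v*a*v⁻¹) (v*b*v⁻¹),
        show (v*u*v⁻¹)*(v*a*v⁻¹)*(v*u*v⁻¹)⁻¹ = (v*u)*a*(v*u)⁻¹ by group,
        show (v*u*v⁻¹)*(v*b*v⁻¹)*(v*u*v⁻¹)⁻¹ = (v*u)*b*(v*u)⁻¹ by group,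
        mul_assoc]
  have h := mul_left_cancel (e1.symm.trans e2)
  rw [← mul_assoc, ← mul_assoc] at h
  exact (mul_right_cancel h).symm
end

section
/- Let M and G be groups and h : M → G satisfy (T1) h(u)h(v) = h(uvu)h(u⁻¹) and (T1)' h(u)h(v) = h(v⁻¹)h(vuv) for all u, v ∈ M. Define c(u,v) = h(u)·h(v)·h(v·u)⁻¹. Then c(u,v) = h(v⁻¹·u⁻¹)⁻¹·h(u⁻¹)·h(v⁻¹) for all u, v ∈ M. -/
theorem T2_relation {M G : Type*} [Group M] [Group G] (h : M → G)
    (hT1 : ∀ u v : M, h u * h v = h (u * v * u) * h u⁻¹)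
    (hT1' : ∀ u v : M, h u * h v = h v⁻¹ * h (v * u * v))
    (c : M → M → G) (hc : ∀ u v : M, c u v = h u * h v * (h (v * u))⁻¹) :
    ∀ u v : M, c u v = (h (v⁻¹ * u⁻¹))⁻¹ * h u⁻¹ * h v⁻¹ := by
  intro u v
  have h1 := hT1' (v⁻¹ * u⁻¹) u
  have h2 := hT1' (u * v⁻¹) v
  rw [show u * (v⁻¹ * u⁻¹) * u = u * v⁻¹ by group] at h1
  rw [show v * (u * v⁻¹) * v = v * u by group] at h2
  rw [hc]
  calc h u * h v * (h (v * u))⁻¹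
      = (h (v⁻¹ * u⁻¹))⁻¹ * (h (v⁻¹ * u⁻¹) * h u) * h v * (h (v * u))⁻¹ := by group
    _ = (h (v⁻¹ * u⁻¹))⁻¹ * (h u⁻¹ * h (u * v⁻¹)) * h v * (h (v * u))⁻¹ := by rw [h1]
    _ = (h (v⁻¹ * u⁻¹))⁻¹ * h u⁻¹ * (h (u * v⁻¹) * h v) * (h (v * u))⁻¹ := by group
    _ = (h (v⁻¹ * u⁻¹))⁻¹ * h u⁻¹ * (h v⁻¹ * h (v * u)) * (h (v * u))⁻¹ := by rw [h2]
    _ = (h (v⁻¹ * u⁻¹))⁻¹ * h u⁻¹ * h v⁻¹ := by group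
end

section
/- Let M and G be groups and h : M → G satisfy (T1) h(u)h(v) = h(uvu)h(u⁻¹) and (T1)' h(u)h(v) = h(v⁻¹)h(vuv), with c(u,v) = h(u)h(v)h(vu)⁻¹. Then c(u,v)·c(v·u, w) = c(u, v·w)·c(v, w) for all u, v, w ∈ M. -/
theorem T4_first_relation {M G : Type*} [Group M] [Group G] (h : M → G)
    (hT1 : ∀ u v : M, h u * h v = h (u * v * u) * h u⁻¹)
    (hT1' : ∀ u v : M, h u * h v = h v⁻¹ * h (v * u * v))
    (c : M → M → G) (hc : ∀ u v : M, c u v = h u * h v * (h (v * u))⁻¹) :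
    ∀ u v w : M, c u v * c (v * u) w = c u (v * w) * c v w := by
  -- conjugation formulas
  have hD : ∀ a b : M, h (a * b * a) = h a * h b * (h a⁻¹)⁻¹ := by
    intro a b
    rw [hT1 a b]
    group
  have hD' : ∀ a b : M, h (a * b * a) = (h a⁻¹)⁻¹ * h b * h a := by
    intro a b
    have h2 := hT1' b a
    rw [show (h a⁻¹)⁻¹ * h b * h a = (h a⁻¹)⁻¹ * (h b * h a) from by group, h2]
    group
  intro u v w
  have e1 : h (w * (v * u)) = (h w⁻¹)⁻¹ * h (v * (u * w⁻¹)) * h w := by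
    have := hD' w (v * (u * w⁻¹))
    rw [show w * (v * (u * w⁻¹)) * w = w * (v * u) from by group] at this
    exact this
  have e2 : h (w * v) = (h w⁻¹)⁻¹ * h (v * w⁻¹) * h w := by
    have := hD' w (v * w⁻¹)
    rw [show w * (v * w⁻¹) * w = w * v from by group] at this
    exact this
  have e3 : h (v * w * u) = h v * h (w * (u * v⁻¹)) * (h v⁻¹)⁻¹ := by
    have := hD v (w * (u * v⁻¹))
    rw [show v * (w * (u * v⁻¹)) * v = v * w * u from by group] at this
    exact this
  have e4 : h (v * w) = h v * h (w * v⁻¹) * (h v⁻¹)⁻¹ := by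
    have := hD v (w * v⁻¹)
    rw [show v * (w * v⁻¹) * v = v * w from by group] at this
    exact this
  have ekey : h (v * (u * w⁻¹)) =
      h (v * w⁻¹) * h (w * (u * v⁻¹)) * (h (w * v⁻¹))⁻¹ := by
    have := hT1 (v * w⁻¹) (w * (u * v⁻¹))
    rw [show v * w⁻¹ * (w * (u * v⁻¹)) * (v * w⁻¹) = v * (u * w⁻¹) from by group,
        show (v * w⁻¹)⁻¹ = w * v⁻¹ from by group] at this
    rw [this]
    group
  rw [hc, hc, hc, hc, e1, e2, e3, e4, ekey]
  group
end

section
/- Let M and G be groups, h : M → G a function satisfying (T1) h(u)h(v) = h(uvu)h(u⁻¹), (T1)' h(u)h(v) = h(v⁻¹)h(vuv), and the conjugation relation (T5)' h(u)^{±1} h(v) h(u)^{∓1} = h(u^{±1} v u^{±1}) h(u^{±2})⁻¹. Set c(x,y) = h(x)h(y)h(yx)⁻¹ and write [x,y] = x y x⁻¹ y⁻¹ in M. Then c(x,y)·h(u)·c(x,y)⁻¹ = h([x,y]·u)·h([x,y])⁻¹ = h([y,x])⁻¹·h(u·[y,x]) for all x, y, u ∈ M. -/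
theorem T5_relation {M G : Type*} [Group M] [Group G] (h : M → G)
    (hT1 : ∀ u v : M, h u * h v = h (u * v * u) * h u⁻¹)
    (hT1' : ∀ u v : M, h u * h v = h v⁻¹ * h (v * u * v))
    (hT5'pos : ∀ u v : M, h u * h v * (h u)⁻¹ = h (u * v * u) * (h (u ^ 2))⁻¹)
    (hT5'neg : ∀ u v : M, (h u)⁻¹ * h v * h u = h (u⁻¹ * v * u⁻¹) * (h (u⁻¹ ^ 2))⁻¹)
    (c : M → M → G) (hc : ∀ x y : M, c x y = h x * h y * (h (y * x))⁻¹) :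
    ∀ x y u : M,
      c x y * h u * (c x y)⁻¹ = h (x * y * x⁻¹ * y⁻¹ * u) * (h (x * y * x⁻¹ * y⁻¹))⁻¹ ∧
      c x y * h u * (c x y)⁻¹ = (h (y * x * y⁻¹ * x⁻¹))⁻¹ * h (u * (y * x * y⁻¹ * x⁻¹)) := by
  intro x y u
  have first : c x y * h u * (c x y)⁻¹
      = h (x * y * x⁻¹ * y⁻¹ * u) * (h (x * y * x⁻¹ * y⁻¹))⁻¹ := by
    rw [hc]
    calc h x * h y * (h (y * x))⁻¹ * h u * (h x * h y * (h (y * x))⁻¹)⁻¹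
        = h x * (h y * ((h (y * x))⁻¹ * h u * h (y * x)) * (h y)⁻¹) * (h x)⁻¹ := by
          group
      _ = h x * (h y * (h ((y * x)⁻¹ * u * (y * x)⁻¹) * (h ((y * x)⁻¹ ^ 2))⁻¹) * (h y)⁻¹)
            * (h x)⁻¹ := by rw [hT5'neg (y * x) u]
      _ = h x * ((h y * h ((y * x)⁻¹ * u * (y * x)⁻¹) * (h y)⁻¹)
            * (h y * h ((y * x)⁻¹ ^ 2) * (h y)⁻¹)⁻¹) * (h x)⁻¹ := by group
      _ = h x * ((h (y * ((y * x)⁻¹ * u * (y * x)⁻¹) * y) * (h (y ^ 2))⁻¹)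
            * (h (y * ((y * x)⁻¹ ^ 2) * y) * (h (y ^ 2))⁻¹)⁻¹) * (h x)⁻¹ := by
          rw [hT5'pos y ((y * x)⁻¹ * u * (y * x)⁻¹), hT5'pos y ((y * x)⁻¹ ^ 2)]
      _ = (h x * h (y * ((y * x)⁻¹ * u * (y * x)⁻¹) * y) * (h x)⁻¹)
            * (h x * h (y * ((y * x)⁻¹ ^ 2) * y) * (h x)⁻¹)⁻¹ := by group
      _ = (h (x * (y * ((y * x)⁻¹ * u * (y * x)⁻¹) * y) * x) * (h (x ^ 2))⁻¹)
            * (h (x * (y * ((y * x)⁻¹ ^ 2) * y) * x) * (h (x ^ 2))⁻¹)⁻¹ := by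
          rw [hT5'pos x (y * ((y * x)⁻¹ * u * (y * x)⁻¹) * y),
            hT5'pos x (y * ((y * x)⁻¹ ^ 2) * y)]
      _ = h (x * (y * ((y * x)⁻¹ * u * (y * x)⁻¹) * y) * x)
            * (h (x * (y * ((y * x)⁻¹ ^ 2) * y) * x))⁻¹ := by group
      _ = h (x * y * x⁻¹ * y⁻¹ * u) * (h (x * y * x⁻¹ * y⁻¹))⁻¹ := by
          have e1 : x * (y * ((y * x)⁻¹ * u * (y * x)⁻¹) * y) * x
              = x * y * x⁻¹ * y⁻¹ * u := by group
          have e2 : x * (y * ((y * x)⁻¹ ^ 2) * y) * x = x * y * x⁻¹ * y⁻¹ := by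
            rw [sq]; group
          rw [e1, e2]
  refine ⟨first, ?_⟩
  rw [first]
  have t := hT1' (u * (y * x * y⁻¹ * x⁻¹)) (x * y * x⁻¹ * y⁻¹)
  have e3 : (x * y * x⁻¹ * y⁻¹)⁻¹ = y * x * y⁻¹ * x⁻¹ := by group
  have e4 : x * y * x⁻¹ * y⁻¹ * (u * (y * x * y⁻¹ * x⁻¹)) * (x * y * x⁻¹ * y⁻¹)
      = x * y * x⁻¹ * y⁻¹ * u := by group
  rw [e3, e4] at t
  calc h (x * y * x⁻¹ * y⁻¹ * u) * (h (x * y * x⁻¹ * y⁻¹))⁻¹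
      = (h (y * x * y⁻¹ * x⁻¹))⁻¹
        * (h (y * x * y⁻¹ * x⁻¹) * h (x * y * x⁻¹ * y⁻¹ * u))
        * (h (x * y * x⁻¹ * y⁻¹))⁻¹ := by group
    _ = (h (y * x * y⁻¹ * x⁻¹))⁻¹
        * (h (u * (y * x * y⁻¹ * x⁻¹)) * h (x * y * x⁻¹ * y⁻¹))
        * (h (x * y * x⁻¹ * y⁻¹))⁻¹ := by rw [← t]
    _ = (h (y * x * y⁻¹ * x⁻¹))⁻¹ * h (u * (y * x * y⁻¹ * x⁻¹)) := by group
end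

section
/- Let D be a division ring and let x, y ∈ D be nonzero elements with x·y ≠ 1 (equivalently y·x ≠ 1). Then x - y⁻¹ and y - x⁻¹ are nonzero, and in the multiplicative group D^× the commutators satisfy [y, x - y⁻¹] = [y - x⁻¹, x], and both are equal to (y·x - 1)·(x·y - 1)⁻¹. -/
/-- Multiplicative commutator `[a,b] = a b a⁻¹ b⁻¹` in a division ring. -/
def dbrkt {D : Type*} [DivisionRing D] (a b : D) : D := a * b * a⁻¹ * b⁻¹

theorem case3_commutator_identity {D : Type*} [DivisionRing D] (x y : D)
    (hx : x ≠ 0) (hy : y ≠ 0) (hxy : x * y ≠ 1) :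
    x - y⁻¹ ≠ 0 ∧ y - x⁻¹ ≠ 0 ∧
      dbrkt y (x - y⁻¹) = dbrkt (y - x⁻¹) x ∧
      dbrkt y (x - y⁻¹) = (y * x - 1) * (x * y - 1)⁻¹ := by
  set u := x * y - 1 with hu
  have hu0 : u ≠ 0 := sub_ne_zero.mpr hxy
  have h1 : x - y⁻¹ = u * y⁻¹ := by
    rw [hu, sub_mul, mul_inv_cancel_right₀ hy, one_mul]
  have h2 : y - x⁻¹ = x⁻¹ * u := by
    rw [hu, mul_sub, inv_mul_cancel_left₀ hx, mul_one]
  have key1 : y * u = (y * x - 1) * y := by rw [hu]; noncomm_ring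
  have key2 : u * x = x * (y * x - 1) := by rw [hu]; noncomm_ring
  have hA : dbrkt y (x - y⁻¹) = (y * x - 1) * u⁻¹ := by
    rw [dbrkt, h1, mul_inv_rev, inv_inv, ← mul_assoc y u, key1, mul_inv_cancel_right₀ hy,
      ← mul_assoc ((y * x - 1) * y⁻¹) y u⁻¹, inv_mul_cancel_right₀ hy]
  have hB : dbrkt (y - x⁻¹) x = (y * x - 1) * u⁻¹ := by
    rw [dbrkt, h2, mul_inv_rev, inv_inv, mul_assoc (x⁻¹ * u * x),
      mul_inv_cancel_right₀ hx, mul_assoc x⁻¹ u x, key2, ← mul_assoc,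
      inv_mul_cancel₀ hx, one_mul]
  exact ⟨h1 ▸ mul_ne_zero hu0 (inv_ne_zero hy),
    h2 ▸ mul_ne_zero (inv_ne_zero hx) hu0, hA.trans hB.symm, hA⟩
end
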